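/- Let G = (σ0,σ1,σ2,σ3) be a 3-gem on a vertex set V with |V| ≥ 4 and let {u,v} be a 2-dipole of G on colors {2,3}. Let G' be the thickening of this 2-dipole of type 0, obtained by replacing σ0 by τ∘σ0∘τ where τ is the transposition exchanging u and σ0 v (so that in G' the 0-colored edges pair u with v and σ0 u with σ0 v, all other 0-edges being unchanged). Then G' is again a 3-gem, the set {u,v} is a {0,2,3}-residue of G' with exactly two vertices, and this residue is a {0,2,3}-dipole of G', i.e., σ1 u ≠ v, so u and v lie in distinct {1}-residues. -/

import Mathlib

/-!
We model a (3+1)-graph on a finite nonempty vertex set `V` as a quadruple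
`σ : Fin 4 → Equiv.Perm V` of fixed-point-free involutions whose generated
subgroup acts transitively on `V`.
-/

/-- `f` is a fixed-point-free involution. -/
def IsFPFInvolution {V : Type*} (f : Equiv.Perm V) : Prop :=
  (∀ x, f x ≠ x) ∧ ∀ x, f (f x) = x

/-- `x` and `y` lie in the same `I`-residue: `y` is in the orbit of `x` under the
subgroup generated by the permutations of the colors in `I`. -/
def SameResidue {V : Type*} (σ : Fin 4 → Equiv.Perm V) (I : Set (Fin 4)) (x y : V) : Prop :=
  ∃ g ∈ Subgroup.closure (σ '' I), g x = y

/-- The set of `I`-residues (orbits on `V` of the subgroup generated by the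
permutations of colors in `I`). -/
def residues {V : Type*} (σ : Fin 4 → Equiv.Perm V) (I : Set (Fin 4)) : Set (Set V) :=
  {O | ∃ x, O = {y | SameResidue σ I x y}}

/-- The number of `I`-residues. -/
noncomputable def numResidues {V : Type*} (σ : Fin 4 → Equiv.Perm V) (I : Set (Fin 4)) : ℕ :=
  (residues σ I).ncard

/-- A (3+1)-graph: four fixed-point-free involutions generating a subgroup that acts
transitively on the vertex set. -/
def IsGraph31 {V : Type*} (σ : Fin 4 → Equiv.Perm V) : Prop :=
  (∀ c, IsFPFInvolution (σ c)) ∧ ∀ x y : V, SameResidue σ Set.univ x y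

/-- `b(G)`: total number of bigons (`ij`-gons over the six unordered pairs of colors). -/
noncomputable def bCount {V : Type*} (σ : Fin 4 → Equiv.Perm V) : ℕ :=
  ∑ p ∈ Finset.univ.filter (fun p : Fin 4 × Fin 4 => p.1 < p.2),
    numResidues σ ({p.1, p.2} : Set (Fin 4))

/-- `t(G)`: total number of 3-residues over the four 3-element subsets of colors. -/
noncomputable def tCount {V : Type*} (σ : Fin 4 → Equiv.Perm V) : ℕ :=
  ∑ c : Fin 4, numResidues σ (({c}ᶜ : Set (Fin 4)))

/-- A 3-gem: a (3+1)-graph with `v(G) + t(G) = b(G)`. -/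
def IsGem {V : Type*} [Fintype V] (σ : Fin 4 → Equiv.Perm V) : Prop :=
  IsGraph31 σ ∧ Fintype.card V + tCount σ = bCount σ

/-- A crystallization: a 3-gem with no 1-dipoles, i.e. for every color `c` and vertex `x`,
the vertices `x` and `σ c x` lie in the same `({0,1,2,3} \ {c})`-residue. -/
def IsCrystallization {V : Type*} [Fintype V] (σ : Fin 4 → Equiv.Perm V) : Prop :=
  IsGem σ ∧ ∀ (c : Fin 4) (x : V), SameResidue σ (({c}ᶜ : Set (Fin 4))) x (σ c x)

/-- The thickening of type 0 of a 2-dipole `{u,v}` on colors `{2,3}`: replace `σ 0` by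
`τ ∘ σ 0 ∘ τ` where `τ` is the transposition exchanging `u` and `σ 0 v`. -/
def thicken0 {V : Type*} [DecidableEq V] (σ : Fin 4 → Equiv.Perm V) (u v : V) :
    Fin 4 → Equiv.Perm V :=
  fun c => if c = 0 then Equiv.swap u (σ 0 v) * σ 0 * Equiv.swap u (σ 0 v) else σ c

/-!
The thickening replaces the two `0`-edges `u — σ₀u`, `v — σ₀v` by `u — v`, `σ₀u — σ₀v`, so only
residues containing colour `0` can change. In such a residue `I` the new relation is obtained
from the old one by gluing or cutting along these edges:
* if `I ⊆ {0,2,3}`, the residue of `u` splits off `{u, v}`, which is closed under every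
  `σ c`, `c ∈ I`: one residue more (for `{0,2}`, `{0,3}`, `{0,2,3}`);
* if `{0,1} ⊆ I`, the new relation is the old one with the classes of `u` and `v` glued. This
  rests on `v` and `σ₀v` staying in one `{0,1}`-residue after thickening, a parity argument.
  The two `01`-gons through `u` and `v` merge, and nothing changes when `u`, `v` were already
  in one `I`-residue (for `{0,1,2}`, `{0,1,3}` and the whole graph).
Hence `b` and `t` both grow by one and `v + t = b` survives.
-/

section Residue

variable {V : Type*} {σ : Fin 4 → Equiv.Perm V} {I J : Set (Fin 4)} {x y z : V}

theorem SameResidue.refl (σ : Fin 4 → Equiv.Perm V) (I : Set (Fin 4)) (x : V) :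
    SameResidue σ I x x :=
  ⟨1, Subgroup.one_mem _, rfl⟩

theorem SameResidue.symm (h : SameResidue σ I x y) : SameResidue σ I y x := by
  obtain ⟨g, hg, rfl⟩ := h
  exact ⟨g⁻¹, Subgroup.inv_mem _ hg, by simp⟩

theorem SameResidue.trans (hxy : SameResidue σ I x y) (hyz : SameResidue σ I y z) :
    SameResidue σ I x z := by
  obtain ⟨g, hg, rfl⟩ := hxy
  obtain ⟨h, hh, rfl⟩ := hyz
  exact ⟨h * g, Subgroup.mul_mem _ hh hg, rfl⟩

theorem SameResidue.mono (hIJ : I ⊆ J) (h : SameResidue σ I x y) : SameResidue σ J x y := by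
  obtain ⟨g, hg, rfl⟩ := h
  exact ⟨g, Subgroup.closure_mono (Set.image_mono hIJ) hg, rfl⟩

theorem equivalence_sameResidue (σ : Fin 4 → Equiv.Perm V) (I : Set (Fin 4)) :
    Equivalence (SameResidue σ I) :=
  ⟨SameResidue.refl σ I, SameResidue.symm, SameResidue.trans⟩

theorem sameResidue_apply {c : Fin 4} (hc : c ∈ I) (x : V) : SameResidue σ I x (σ c x) :=
  ⟨σ c, Subgroup.subset_closure ⟨c, hc, rfl⟩, rfl⟩

theorem SameResidue.apply {c : Fin 4} (hc : c ∈ I) (h : SameResidue σ I x y) :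
    SameResidue σ I (σ c x) (σ c y) :=
  ((sameResidue_apply hc x).symm.trans h).trans (sameResidue_apply hc y)

theorem apply_ne_of_not_sameResidue {c : Fin 4} (hc : c ∈ I) (h : ¬ SameResidue σ I x y) :
    σ c x ≠ y :=
  fun hxy => h (hxy ▸ sameResidue_apply hc x)

theorem sameResidue_le {E : V → V → Prop} (hE : Equivalence E)
    (h : ∀ c ∈ I, ∀ x, E x (σ c x)) : SameResidue σ I ≤ E := by
  rintro x _ ⟨g, hg, rfl⟩
  induction hg using Subgroup.closure_induction generalizing x with
  | mem _ hs =>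
    obtain ⟨c, hc, rfl⟩ := hs
    exact h c hc x
  | one => exact hE.refl x
  | mul a b _ _ ha hb => exact hE.trans (hb x) (ha (b x))
  | inv a _ ha => simpa using hE.symm (ha (a⁻¹ x))

theorem setOf_sameResidue_eq_pair {u v : V} {c : Fin 4} (hc : c ∈ I)
    (hI : ∀ c ∈ I, σ c u = v ∧ σ c v = u) : {y | SameResidue σ I u y} = {u, v} := by
  refine Set.eq_of_subset_of_subset (fun y hy => ?_) ?_
  · have hE : Equivalence fun x y : V => (x ∈ ({u, v} : Set V) ↔ y ∈ ({u, v} : Set V)) :=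
      ⟨fun _ => Iff.rfl, Iff.symm, Iff.trans⟩
    refine (sameResidue_le hE (fun c hc x => ?_) u y hy).1 (Set.mem_insert u {v})
    obtain ⟨hu, hv⟩ := hI c hc
    simp only [Set.mem_insert_iff, Set.mem_singleton_iff]
    constructor
    · rintro (rfl | rfl) <;> simp [hu, hv]
    · rintro (h | h)
      · exact Or.inr ((σ c).injective (h.trans hv.symm))
      · exact Or.inl ((σ c).injective (h.trans hu.symm))
  · rintro y (rfl | rfl)
    · exact SameResidue.refl σ I y
    · simpa [(hI c hc).1] using sameResidue_apply (σ := σ) hc u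

end Residue

section Glue

variable {V : Type*} {R E : V → V → Prop} {a b : V}

/-- For an equivalence `R`, the equivalence generated by `R` and the pair `(a, b)`. -/
def glue (R : V → V → Prop) (a b : V) (x y : V) : Prop :=
  R x y ∨ (R x a ∧ R b y) ∨ (R x b ∧ R a y)

theorem le_glue : R ≤ glue R a b := fun _ _ h => Or.inl h

theorem glue_of_left_of_right {x y : V} (hxa : R x a) (hby : R b y) : glue R a b x y :=
  Or.inr (Or.inl ⟨hxa, hby⟩)

theorem glue_of_right_of_left {x y : V} (hxb : R x b) (hay : R a y) : glue R a b x y :=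
  Or.inr (Or.inr ⟨hxb, hay⟩)

theorem Equivalence.glue (hR : Equivalence R) : Equivalence (glue R a b) := by
  refine ⟨fun x => le_glue x x (hR.refl x), ?_, ?_⟩
  · rintro x y (h | ⟨h1, h2⟩ | ⟨h1, h2⟩)
    · exact le_glue _ _ (hR.symm h)
    · exact glue_of_right_of_left (hR.symm h2) (hR.symm h1)
    · exact glue_of_left_of_right (hR.symm h2) (hR.symm h1)
  · rintro x y z (h | ⟨h1, h2⟩ | ⟨h1, h2⟩) (g | ⟨g1, g2⟩ | ⟨g1, g2⟩)
    · exact le_glue _ _ (hR.trans h g)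
    · exact glue_of_left_of_right (hR.trans h g1) g2
    · exact glue_of_right_of_left (hR.trans h g1) g2
    · exact glue_of_left_of_right h1 (hR.trans h2 g)
    · exact glue_of_left_of_right h1 g2
    · exact le_glue _ _ (hR.trans h1 g2)
    · exact glue_of_right_of_left h1 (hR.trans h2 g)
    · exact le_glue _ _ (hR.trans h1 g2)
    · exact glue_of_right_of_left h1 g2

theorem glue_eq_self (hR : Equivalence R) (hab : R a b) : glue R a b = R := by
  refine le_antisymm (fun x y h => ?_) le_glue
  rcases h with h | ⟨h1, h2⟩ | ⟨h1, h2⟩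
  · exact h
  · exact hR.trans h1 (hR.trans hab h2)
  · exact hR.trans h1 (hR.trans (hR.symm hab) h2)

theorem glue_le (hE : Equivalence E) (hRE : R ≤ E) (hab : E a b) : glue R a b ≤ E := by
  rintro x y (h | ⟨h1, h2⟩ | ⟨h1, h2⟩)
  · exact hRE x y h
  · exact hE.trans (hRE _ _ h1) (hE.trans hab (hRE _ _ h2))
  · exact hE.trans (hRE _ _ h1) (hE.trans (hE.symm hab) (hRE _ _ h2))

theorem Equivalence.setOf_eq_setOf_iff (hR : Equivalence R) {x y : V} :
    {z | R x z} = {z | R y z} ↔ R x y := by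
  refine ⟨fun h => ?_, fun h => Set.ext fun z => ⟨hR.trans (hR.symm h), hR.trans h⟩⟩
  have hy : y ∈ {z | R y z} := hR.refl y
  rwa [← h] at hy

theorem setOf_glue_of_not (hxa : ¬ R x a) (hxb : ¬ R x b) :
    {y | glue R a b x y} = {y | R x y} := by
  ext y
  simp only [glue, Set.mem_ofPred_eq, hxa, hxb, false_and, or_false]

theorem setOf_glue_of_or (hR : Equivalence R) (hx : R x a ∨ R x b) :
    {y | glue R a b x y} = {y | R a y} ∪ {y | R b y} := by
  ext y
  simp only [glue, Set.mem_ofPred_eq, Set.mem_union]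
  constructor
  · rintro (h | ⟨-, h⟩ | ⟨-, h⟩)
    · rcases hx with hx | hx
      exacts [Or.inl (hR.trans (hR.symm hx) h), Or.inr (hR.trans (hR.symm hx) h)]
    · exact Or.inr h
    · exact Or.inl h
  · rintro (h | h) <;> rcases hx with hx | hx
    · exact Or.inl (hR.trans hx h)
    · exact Or.inr (Or.inr ⟨hx, h⟩)
    · exact Or.inr (Or.inl ⟨hx, h⟩)
    · exact Or.inl (hR.trans hx h)

theorem ncard_classes_eq_ncard_classes_glue_add_one [Finite V] (hR : Equivalence R)
    (hab : ¬ R a b) :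
    {O | ∃ x, O = {y | R x y}}.ncard = {O | ∃ x, O = {y | glue R a b x y}}.ncard + 1 := by
  set A := {y | R a y}
  set B := {y | R b y}
  set C := {O | ∃ x, O = {y | R x y}}
  have hAB : A ≠ B := fun h => hab (hR.setOf_eq_setOf_iff.1 h)
  have hsub : {A, B} ⊆ C := by
    rintro O (rfl | rfl)
    exacts [⟨a, rfl⟩, ⟨b, rfl⟩]
  have hnot : A ∪ B ∉ C \ {A, B} := by
    rintro ⟨⟨x, hx⟩, -⟩
    have ha : a ∈ {y | R x y} := hx ▸ Or.inl (hR.refl a)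
    have hb : b ∈ {y | R x y} := hx ▸ Or.inr (hR.refl b)
    exact hab (hR.trans (hR.symm ha) hb)
  have hglue : {O | ∃ x, O = {y | glue R a b x y}} = insert (A ∪ B) (C \ {A, B}) := by
    ext O
    constructor
    · rintro ⟨x, rfl⟩
      by_cases hx : R x a ∨ R x b
      · exact Or.inl (setOf_glue_of_or hR hx)
      · rw [not_or] at hx
        rw [setOf_glue_of_not hx.1 hx.2]
        refine Or.inr ⟨⟨x, rfl⟩, ?_⟩
        rintro (h | h)
        exacts [hx.1 (hR.setOf_eq_setOf_iff.1 h), hx.2 (hR.setOf_eq_setOf_iff.1 h)]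
    · rintro (rfl | ⟨⟨x, rfl⟩, hx⟩)
      · exact ⟨a, (setOf_glue_of_or hR (Or.inl (hR.refl a))).symm⟩
      · have hxa : ¬ R x a := fun h => hx (Or.inl (hR.setOf_eq_setOf_iff.2 h))
        have hxb : ¬ R x b := fun h => hx (Or.inr (hR.setOf_eq_setOf_iff.2 h))
        exact ⟨x, (setOf_glue_of_not hxa hxb).symm⟩
  have htwo := Set.ncard_le_ncard hsub
  rw [Set.ncard_pair hAB] at htwo
  rw [hglue, Set.ncard_insert_of_notMem hnot, Set.ncard_sdiff hsub, Set.ncard_pair hAB]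
  omega

end Glue

theorem Finset.even_card_of_involution {α : Type*} {s : Finset α} {f : α → α}
    (hmem : ∀ x ∈ s, f x ∈ s) (hne : ∀ x ∈ s, f x ≠ x) (hinv : ∀ x ∈ s, f (f x) = x) :
    Even s.card := by
  rw [← ZMod.natCast_eq_zero_iff_even, Finset.card_eq_sum_ones, Nat.cast_sum, Nat.cast_one]
  exact Finset.sum_involution (fun x _ => f x) (fun _ _ => by decide) (fun x hx _ => hne x hx)
    hmem hinv

theorem IsFPFInvolution.conj {V : Type*} {f : Equiv.Perm V} (hf : IsFPFInvolution f)
    (g : Equiv.Perm V) : IsFPFInvolution (g * f * g⁻¹) := by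
  refine ⟨fun x hx => hf.1 (g⁻¹ x) ?_, fun x => ?_⟩
  · simp only [Equiv.Perm.mul_apply] at hx
    exact (Equiv.eq_symm_apply g).2 hx
  · simp [Equiv.Perm.mul_apply, hf.2]

section Thicken

variable {V : Type*} [DecidableEq V] {σ : Fin 4 → Equiv.Perm V} {u v : V}

theorem thicken0_of_ne_zero {c : Fin 4} (hc : c ≠ 0) : thicken0 σ u v c = σ c := by
  simp [thicken0, hc]

theorem thicken0_zero :
    thicken0 σ u v 0 = Equiv.swap u (σ 0 v) * σ 0 * (Equiv.swap u (σ 0 v))⁻¹ := by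
  simp [thicken0]

theorem isFPFInvolution_thicken0 (hσ : ∀ c, IsFPFInvolution (σ c)) (c : Fin 4) :
    IsFPFInvolution (thicken0 σ u v c) := by
  rcases eq_or_ne c 0 with rfl | hc
  · rw [thicken0_zero]
    exact (hσ 0).conj _
  · rw [thicken0_of_ne_zero hc]
    exact hσ c

theorem sameResidue_thicken0_of_zero_notMem {I : Set (Fin 4)} (hI : 0 ∉ I) :
    SameResidue (thicken0 σ u v) I = SameResidue σ I := by
  have : thicken0 σ u v '' I = σ '' I :=
    Set.image_congr fun c hc => thicken0_of_ne_zero fun h => hI (h ▸ hc)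
  ext x y
  unfold SameResidue
  rw [this]

theorem numResidues_thicken0_of_zero_notMem {I : Set (Fin 4)} (hI : 0 ∉ I) :
    numResidues (thicken0 σ u v) I = numResidues σ I := by
  rw [numResidues, numResidues, residues, residues, sameResidue_thicken0_of_zero_notMem hI]

section

variable (h0 : IsFPFInvolution (σ 0))
include h0

theorem thicken0_zero_apply_thicken0_zero (x : V) :
    thicken0 σ u v 0 (thicken0 σ u v 0 x) = x := by
  rw [thicken0_zero]
  exact (h0.conj _).2 x

theorem thicken0_zero_apply_of_ne {x : V} (hxu : x ≠ u) (hxv : x ≠ v) (hxu' : x ≠ σ 0 u)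
    (hxv' : x ≠ σ 0 v) : thicken0 σ u v 0 x = σ 0 x := by
  have hσx : σ 0 x ≠ u := fun h => hxu' (by rw [← h, h0.2])
  rw [thicken0_zero, Equiv.swap_inv, Equiv.Perm.mul_apply, Equiv.Perm.mul_apply,
    Equiv.swap_apply_of_ne_of_ne hxu hxv',
    Equiv.swap_apply_of_ne_of_ne hσx ((σ 0).injective.ne hxv)]

theorem thicken0_zero_apply_left (huv : u ≠ v) : thicken0 σ u v 0 u = v := by
  rw [thicken0_zero, Equiv.swap_inv, Equiv.Perm.mul_apply, Equiv.Perm.mul_apply,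
    Equiv.swap_apply_left, h0.2, Equiv.swap_apply_of_ne_of_ne huv.symm (h0.1 v).symm]

theorem thicken0_zero_apply_right (huv : u ≠ v) : thicken0 σ u v 0 v = u := by
  simpa [thicken0_zero_apply_left h0 huv] using
    thicken0_zero_apply_thicken0_zero (u := u) (v := v) h0 u

theorem thicken0_zero_apply_zero_left (huv : u ≠ v) :
    thicken0 σ u v 0 (σ 0 u) = σ 0 v := by
  rw [thicken0_zero, Equiv.swap_inv, Equiv.Perm.mul_apply, Equiv.Perm.mul_apply,
    Equiv.swap_apply_of_ne_of_ne (h0.1 u) ((σ 0).injective.ne huv), h0.2, Equiv.swap_apply_left]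

theorem thicken0_zero_apply_zero_right (huv : u ≠ v) :
    thicken0 σ u v 0 (σ 0 v) = σ 0 u := by
  simpa [thicken0_zero_apply_zero_left h0 huv] using
    thicken0_zero_apply_thicken0_zero (u := u) (v := v) h0 (σ 0 u)

theorem sameResidue_thicken0_left (huv : u ≠ v) {I : Set (Fin 4)} (hI : 0 ∈ I) :
    SameResidue (thicken0 σ u v) I u v := by
  simpa [thicken0_zero_apply_left h0 huv] using sameResidue_apply (σ := thicken0 σ u v) hI u

variable {I : Set (Fin 4)} {E : V → V → Prop}

theorem sameResidue_thicken0_le (huv : u ≠ v) (hE : Equivalence E) (hσ : SameResidue σ I ≤ E)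
    (huvE : E u v) (hσuv : E (σ 0 u) (σ 0 v)) : SameResidue (thicken0 σ u v) I ≤ E := by
  refine sameResidue_le hE fun c hc x => ?_
  rcases eq_or_ne c 0 with rfl | hc0
  · rcases eq_or_ne x u with rfl | hxu
    · rwa [thicken0_zero_apply_left h0 huv]
    rcases eq_or_ne x v with rfl | hxv
    · rw [thicken0_zero_apply_right h0 huv]
      exact hE.symm huvE
    rcases eq_or_ne x (σ 0 u) with rfl | hxu'
    · rwa [thicken0_zero_apply_zero_left h0 huv]
    rcases eq_or_ne x (σ 0 v) with rfl | hxv'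
    · rw [thicken0_zero_apply_zero_right h0 huv]
      exact hE.symm hσuv
    rw [thicken0_zero_apply_of_ne h0 hxu hxv hxu' hxv']
    exact hσ _ _ (sameResidue_apply hc x)
  · rw [thicken0_of_ne_zero hc0]
    exact hσ _ _ (sameResidue_apply hc x)

theorem sameResidue_le_of_thicken0_le (hE : Equivalence E)
    (hσ' : SameResidue (thicken0 σ u v) I ≤ E) (hu : E u (σ 0 u)) (hv : E v (σ 0 v)) :
    SameResidue σ I ≤ E := by
  refine sameResidue_le hE fun c hc x => ?_
  rcases eq_or_ne c 0 with rfl | hc0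
  · rcases eq_or_ne x u with rfl | hxu
    · exact hu
    rcases eq_or_ne x v with rfl | hxv
    · exact hv
    rcases eq_or_ne x (σ 0 u) with rfl | hxu'
    · rw [h0.2]
      exact hE.symm hu
    rcases eq_or_ne x (σ 0 v) with rfl | hxv'
    · rw [h0.2]
      exact hE.symm hv
    rw [← thicken0_zero_apply_of_ne h0 hxu hxv hxu' hxv']
    exact hσ' _ _ (sameResidue_apply hc x)
  · rw [← thicken0_of_ne_zero (σ := σ) (u := u) (v := v) hc0]
    exact hσ' _ _ (sameResidue_apply hc x)

end

/-- If `v` and `σ 0 v` were in different `{0,1}`-residues of the thickening,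
the intersection `D` of the new `{0,1}`-residue of `v` with the old one of `u` would be
invariant under `σ 1`, and `D \ {u}` under `σ 0`; both being fixed-point free, `|D|` would be
both even and odd. -/
theorem sameResidue_thicken0_zero_one [Fintype V] (hσ : ∀ c, IsFPFInvolution (σ c))
    (huv : u ≠ v) (hdip : ¬ SameResidue σ {0, 1} u v) :
    SameResidue (thicken0 σ u v) {0, 1} v (σ 0 v) := by
  have h0J : (0 : Fin 4) ∈ ({0, 1} : Set (Fin 4)) := by simp
  have h1J : (1 : Fin 4) ∈ ({0, 1} : Set (Fin 4)) := by simp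
  classical
  by_contra hA
  let D := Finset.univ.filter fun y =>
    SameResidue (thicken0 σ u v) {0, 1} v y ∧ SameResidue σ {0, 1} u y
  have huD : u ∈ D := by
    have hvu := sameResidue_apply (σ := thicken0 σ u v) h0J v
    rw [thicken0_zero_apply_right (hσ 0) huv] at hvu
    simpa [D] using ⟨hvu, SameResidue.refl σ _ u⟩
  have hD : Even D.card := by
    refine Finset.even_card_of_involution (f := σ 1) (fun y hy => ?_) (fun y _ => (hσ 1).1 y)
      (fun y _ => (hσ 1).2 y)
    simp only [D, Finset.mem_filter, Finset.mem_univ, true_and] at hy ⊢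
    have h1 := sameResidue_apply (σ := thicken0 σ u v) h1J y
    rw [thicken0_of_ne_zero (c := 1) (by decide)] at h1
    exact ⟨hy.1.trans h1, hy.2.trans (sameResidue_apply h1J y)⟩
  have hDu : Even (D.erase u).card := by
    refine Finset.even_card_of_involution (f := σ 0) (fun y hy => ?_) (fun y _ => (hσ 0).1 y)
      (fun y _ => (hσ 0).2 y)
    simp only [D, Finset.mem_erase, Finset.mem_filter, Finset.mem_univ, true_and] at hy ⊢
    obtain ⟨hyu, hy', hy⟩ := hy
    have hyv : y ≠ v := by rintro rfl; exact hdip hy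
    have hyv' : y ≠ σ 0 v := by rintro rfl; exact hA hy'
    have hyu' : y ≠ σ 0 u := by
      rintro rfl
      refine hA (hy'.trans ?_)
      simpa [thicken0_zero_apply_zero_left (hσ 0) huv] using
        sameResidue_apply (σ := thicken0 σ u v) h0J (σ 0 u)
    have h0y := sameResidue_apply (σ := thicken0 σ u v) h0J y
    rw [thicken0_zero_apply_of_ne (hσ 0) hyu hyv hyu' hyv'] at h0y
    refine ⟨fun h => hyu' ?_, hy'.trans h0y, hy.trans (sameResidue_apply h0J y)⟩
    rw [← h, (hσ 0).2]
  rw [Finset.card_erase_of_mem huD] at hDu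
  have hpos := Finset.card_pos.2 ⟨u, huD⟩
  obtain ⟨k, hk⟩ := hD
  obtain ⟨m, hm⟩ := hDu
  omega

theorem sameResidue_thicken0_zero_one_left [Fintype V] (hσ : ∀ c, IsFPFInvolution (σ c))
    (huv : u ≠ v) (hdip : ¬ SameResidue σ {0, 1} u v) :
    SameResidue (thicken0 σ u v) {0, 1} u (σ 0 u) := by
  have h := (sameResidue_thicken0_zero_one hσ huv hdip).apply (c := 0) (by simp)
  rwa [thicken0_zero_apply_right (hσ 0) huv, thicken0_zero_apply_zero_right (hσ 0) huv] at h

end Thicken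

section Merge

variable {V : Type*} [Fintype V] [DecidableEq V] {σ : Fin 4 → Equiv.Perm V} {u v : V}
  {I : Set (Fin 4)} (hσ : ∀ c, IsFPFInvolution (σ c)) (huv : u ≠ v)
  (hdip : ¬ SameResidue σ {0, 1} u v)
include hσ huv hdip

theorem sameResidue_thicken0_eq_glue (h01 : {0, 1} ⊆ I) :
    SameResidue (thicken0 σ u v) I = glue (SameResidue σ I) u v := by
  have h0I : (0 : Fin 4) ∈ I := h01 (by simp)
  have hR := equivalence_sameResidue σ I
  have hR' := equivalence_sameResidue (thicken0 σ u v) I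
  refine le_antisymm ?_ (glue_le hR' ?_ (sameResidue_thicken0_left (hσ 0) huv h0I))
  · exact sameResidue_thicken0_le (hσ 0) huv hR.glue le_glue
      (glue_of_left_of_right (hR.refl u) (hR.refl v))
      (glue_of_left_of_right (sameResidue_apply h0I u).symm (sameResidue_apply h0I v))
  · exact sameResidue_le_of_thicken0_le (hσ 0) hR' le_rfl
      ((sameResidue_thicken0_zero_one_left hσ huv hdip).mono h01)
      ((sameResidue_thicken0_zero_one hσ huv hdip).mono h01)

theorem numResidues_thicken0_zero_one :
    numResidues σ {0, 1} = numResidues (thicken0 σ u v) {0, 1} + 1 := by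
  rw [numResidues, numResidues, residues, residues,
    sameResidue_thicken0_eq_glue hσ huv hdip subset_rfl]
  exact ncard_classes_eq_ncard_classes_glue_add_one (equivalence_sameResidue σ _) hdip

theorem numResidues_thicken0_eq (h01 : {0, 1} ⊆ I) {c : Fin 4} (hc : c ∈ I)
    (hcuv : σ c u = v) : numResidues (thicken0 σ u v) I = numResidues σ I := by
  rw [numResidues, numResidues, residues, residues, sameResidue_thicken0_eq_glue hσ huv hdip h01,
    glue_eq_self (equivalence_sameResidue σ I) (hcuv ▸ sameResidue_apply hc u)]

end Merge

section Split

variable {V : Type*} [DecidableEq V] {σ : Fin 4 → Equiv.Perm V} {u v : V} {I : Set (Fin 4)}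
  (hσ : ∀ c, IsFPFInvolution (σ c)) (huv : u ≠ v) (h0I : 0 ∈ I)
  (hIuv : ∀ c ∈ I, c ≠ 0 → σ c u = v)
include hσ huv h0I hIuv

theorem setOf_sameResidue_thicken0 :
    {y | SameResidue (thicken0 σ u v) I u y} = {u, v} := by
  refine setOf_sameResidue_eq_pair h0I fun c hc => ?_
  rcases eq_or_ne c 0 with rfl | hc0
  · exact ⟨thicken0_zero_apply_left (hσ 0) huv, thicken0_zero_apply_right (hσ 0) huv⟩
  · rw [thicken0_of_ne_zero hc0, ← hIuv c hc hc0, (hσ c).2]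
    exact ⟨rfl, rfl⟩

theorem sameResidue_eq_glue_thicken0 {c : Fin 4} (hc : c ∈ I) (hc0 : c ≠ 0) :
    SameResidue σ I = glue (SameResidue (thicken0 σ u v) I) u (σ 0 u) := by
  have hR := equivalence_sameResidue σ I
  have hR' := equivalence_sameResidue (thicken0 σ u v) I
  have hvR : SameResidue σ I u v := hIuv c hc hc0 ▸ sameResidue_apply hc u
  have hzero := sameResidue_apply (σ := thicken0 σ u v) h0I (σ 0 u)
  rw [thicken0_zero_apply_zero_left (hσ 0) huv] at hzero
  refine le_antisymm ?_ (glue_le hR ?_ (sameResidue_apply h0I u))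
  · exact sameResidue_le_of_thicken0_le (hσ 0) hR'.glue le_glue
      (glue_of_left_of_right (hR'.refl u) (hR'.refl _))
      (glue_of_left_of_right (sameResidue_thicken0_left (hσ 0) huv h0I).symm hzero)
  · exact sameResidue_thicken0_le (hσ 0) huv hR le_rfl hvR (hvR.apply h0I)

theorem numResidues_thicken0_eq_add_one [Fintype V] (hu : σ 0 u ≠ v) {c : Fin 4} (hc : c ∈ I)
    (hc0 : c ≠ 0) : numResidues (thicken0 σ u v) I = numResidues σ I + 1 := by
  have hsplit : ¬ SameResidue (thicken0 σ u v) I u (σ 0 u) := by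
    intro h
    have h' : σ 0 u ∈ ({u, v} : Set V) := setOf_sameResidue_thicken0 hσ huv h0I hIuv ▸ h
    rcases h' with h' | h'
    exacts [(hσ 0).1 u h', hu h']
  rw [numResidues, numResidues, residues, residues,
    sameResidue_eq_glue_thicken0 hσ huv h0I hIuv hc hc0]
  exact ncard_classes_eq_ncard_classes_glue_add_one (equivalence_sameResidue _ I) hsplit

end Split

theorem bCount_eq {V : Type*} (σ : Fin 4 → Equiv.Perm V) :
    bCount σ = numResidues σ {0, 1} + numResidues σ {0, 2} + numResidues σ {0, 3} +
      numResidues σ {1, 2} + numResidues σ {1, 3} + numResidues σ {2, 3} := by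
  simp [bCount, Finset.sum_filter, Fintype.sum_prod_type, Fin.sum_univ_four, add_assoc]

theorem tCount_eq {V : Type*} (σ : Fin 4 → Equiv.Perm V) :
    tCount σ = numResidues σ {0}ᶜ + numResidues σ {1}ᶜ + numResidues σ {2}ᶜ +
      numResidues σ {3}ᶜ := by
  simp [tCount, Fin.sum_univ_four]

theorem apply_eq_of_mem_zero_two_three {V : Type*} {σ : Fin 4 → Equiv.Perm V} {u v : V}
    (h2 : σ 2 u = v) (h3 : σ 3 u = v) : ∀ c ∈ ({0, 2, 3} : Set (Fin 4)), c ≠ 0 → σ c u = v := by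
  rintro c (rfl | rfl | rfl) hc
  exacts [absurd rfl hc, h2, h3]

section Dipole

variable {V : Type*} [Fintype V] [DecidableEq V] {σ : Fin 4 → Equiv.Perm V} {u v : V}
  (hσ : ∀ c, IsFPFInvolution (σ c)) (huv : u ≠ v) (h2 : σ 2 u = v) (h3 : σ 3 u = v)
  (hdip : ¬ SameResidue σ {0, 1} u v)
include hσ huv h2 h3 hdip

theorem numResidues_thicken0_of_subset {I : Set (Fin 4)} (hI : I ⊆ {0, 2, 3}) (h0I : 0 ∈ I)
    (h23 : 2 ∈ I ∨ 3 ∈ I) : numResidues (thicken0 σ u v) I = numResidues σ I + 1 := by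
  have hIuv c (hc : c ∈ I) := apply_eq_of_mem_zero_two_three h2 h3 c (hI hc)
  have hu := apply_ne_of_not_sameResidue (c := 0) (by simp) hdip
  rcases h23 with h2I | h3I
  exacts [numResidues_thicken0_eq_add_one hσ huv h0I hIuv hu h2I (by decide),
    numResidues_thicken0_eq_add_one hσ huv h0I hIuv hu h3I (by decide)]

theorem bCount_thicken0 : bCount (thicken0 σ u v) = bCount σ + 1 := by
  rw [bCount_eq, bCount_eq, numResidues_thicken0_zero_one hσ huv hdip,
    numResidues_thicken0_of_subset hσ huv h2 h3 hdip (I := {0, 2}) (by simp) (by simp) (by simp),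
    numResidues_thicken0_of_subset hσ huv h2 h3 hdip (I := {0, 3}) (by simp) (by simp) (by simp),
    numResidues_thicken0_of_zero_notMem (I := {1, 2}) (by simp),
    numResidues_thicken0_of_zero_notMem (I := {1, 3}) (by simp),
    numResidues_thicken0_of_zero_notMem (I := {2, 3}) (by simp)]
  omega

theorem tCount_thicken0 : tCount (thicken0 σ u v) = tCount σ + 1 := by
  rw [tCount_eq, tCount_eq, numResidues_thicken0_of_zero_notMem (I := {0}ᶜ) (by simp),
    numResidues_thicken0_of_subset hσ huv h2 h3 hdip (I := {1}ᶜ)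
      (fun c => by fin_cases c <;> simp) (by simp) (by simp),
    numResidues_thicken0_eq hσ huv hdip (I := {2}ᶜ) (by simp) (c := 3) (by simp) h3,
    numResidues_thicken0_eq hσ huv hdip (I := {3}ᶜ) (by simp) (c := 2) (by simp) h2]
  omega

end Dipole

theorem thicken0_isGem_general {V : Type*} [Fintype V] [DecidableEq V]
    (σ : Fin 4 → Equiv.Perm V) (hgem : IsGem σ)
    (u v : V) (huv : u ≠ v) (h2 : σ 2 u = v) (h3 : σ 3 u = v)
    (hdip : ¬ SameResidue σ ({0, 1} : Set (Fin 4)) u v) :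
    IsGem (thicken0 σ u v) ∧
    {y | SameResidue (thicken0 σ u v) ({0, 2, 3} : Set (Fin 4)) u y} = {u, v} ∧
    σ 1 u ≠ v ∧
    ¬ SameResidue (thicken0 σ u v) ({1} : Set (Fin 4)) u v := by
  obtain ⟨⟨hσ, hconn⟩, hcount⟩ := hgem
  have hconn' : ∀ x y, SameResidue (thicken0 σ u v) Set.univ x y := by
    rwa [sameResidue_thicken0_eq_glue hσ huv hdip (Set.subset_univ _),
      glue_eq_self (equivalence_sameResidue σ _) (hconn u v)]
  have hcount' : Fintype.card V + tCount (thicken0 σ u v) = bCount (thicken0 σ u v) := by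
    rw [bCount_thicken0 hσ huv h2 h3 hdip, tCount_thicken0 hσ huv h2 h3 hdip]
    omega
  refine ⟨⟨⟨isFPFInvolution_thicken0 hσ, hconn'⟩, hcount'⟩,
    setOf_sameResidue_thicken0 hσ huv (by simp) (apply_eq_of_mem_zero_two_three h2 h3),
    apply_ne_of_not_sameResidue (by simp) hdip, ?_⟩
  rw [sameResidue_thicken0_of_zero_notMem (by simp)]
  exact fun h => hdip (h.mono (by simp))

/-- Let `G` be a 3-gem on `V` with `|V| ≥ 4` and `{u,v}` a 2-dipole of
`G` on colors `{2,3}` (so `σ 2 u = v`, `σ 3 u = v`, and `u`, `v` lie in distinct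
`{0,1}`-residues). Let `G'` be the thickening of this 2-dipole of type 0. Then `G'` is
again a 3-gem, the set `{u,v}` is a `{0,2,3}`-residue of `G'` with exactly two vertices,
and this residue is a `{0,2,3}`-dipole of `G'`: `σ 1 u ≠ v`, so `u` and `v` lie in
distinct `{1}`-residues of `G'`. -/
theorem thicken0_isGem {V : Type*} [Fintype V] [DecidableEq V]
    (σ : Fin 4 → Equiv.Perm V) (hgem : IsGem σ) (hcard : 4 ≤ Fintype.card V)
    (u v : V) (huv : u ≠ v) (h2 : σ 2 u = v) (h3 : σ 3 u = v)
    (hdip : ¬ SameResidue σ ({0, 1} : Set (Fin 4)) u v) :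
    IsGem (thicken0 σ u v) ∧
    {y | SameResidue (thicken0 σ u v) ({0, 2, 3} : Set (Fin 4)) u y} = {u, v} ∧
    σ 1 u ≠ v ∧
    ¬ SameResidue (thicken0 σ u v) ({1} : Set (Fin 4)) u v :=
  thicken0_isGem_general σ hgem u v huv h2 h3 hdip
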